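/- arXiv:1410.8750 — 6 statements merged into one kernel-verified Lean document; each statement's English description precedes it below -/
import Mathlib

section
/- For any permutation $\pi$ on $[n]$ with first-ranked element $e_\pi$ and any permutation $\pi'$ on $[n]$, the Kendall-tau distance satisfies $d_{kt}(\pi, \pi') = (pos_{\pi'}(e_\pi) - 1) + d_{kt}(\pi \setminus e_\pi, \pi' \setminus e_\pi)$, where $pos_{\pi'}(e_\pi)$ is the position of $e_\pi$ in $\pi'$. -/
/-- Kendall-tau distance between two permutations of `Fin n`. -/
def dkt {n : ℕ} (π π' : Equiv.Perm (Fin n)) : ℕ :=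
  (Finset.univ.filter (fun p : Fin n × Fin n =>
    p.1 < p.2 ∧ ¬((π.symm p.1 < π.symm p.2) ↔ (π'.symm p.1 < π'.symm p.2)))).card

/-- Delete the element `e` from the ranking `π`. -/
def deleteElem {n : ℕ} (π : Equiv.Perm (Fin (n + 1))) (e : Fin (n + 1)) :
    Equiv.Perm (Fin n) :=
  Equiv.removeNone ((finSuccEquiv' (π.symm e)).symm.trans (π.trans (finSuccEquiv' e)))

lemma deleteElem_succAbove {n : ℕ} (π : Equiv.Perm (Fin (n + 1))) (e : Fin (n + 1)) (a : Fin n) :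
    e.succAbove (deleteElem π e a) = π ((π.symm e).succAbove a) := by
  have hne : π ((π.symm e).succAbove a) ≠ e := by
    intro h
    exact Fin.succAbove_ne (π.symm e) a (π.injective (by rw [h, Equiv.apply_symm_apply]))
  have hex : ∃ x', ((finSuccEquiv' (π.symm e)).symm.trans (π.trans (finSuccEquiv' e))) (some a)
      = some x' := by
    simp only [Equiv.trans_apply, finSuccEquiv'_symm_some]
    rcases h : finSuccEquiv' e (π ((π.symm e).succAbove a)) with _ | x'
    · exact absurd ((finSuccEquiv' e).injective (h.trans (finSuccEquiv'_at e).symm)) hne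
    · exact ⟨x', rfl⟩
  have h := Equiv.removeNone_some _ hex
  simp only [Equiv.trans_apply, finSuccEquiv'_symm_some] at h
  have h2 := congrArg (finSuccEquiv' e).symm h
  rw [finSuccEquiv'_symm_some, Equiv.symm_apply_apply] at h2
  exact h2

lemma deleteElem_symm_succAbove {n : ℕ} (π : Equiv.Perm (Fin (n + 1))) (e : Fin (n + 1))
    (b : Fin n) :
    (π.symm e).succAbove ((deleteElem π e).symm b) = π.symm (e.succAbove b) := by
  have h := deleteElem_succAbove π e ((deleteElem π e).symm b)
  rw [Equiv.apply_symm_apply] at h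
  rw [h, Equiv.symm_apply_apply]

lemma symm_lt_symm_iff {n : ℕ} (π : Equiv.Perm (Fin (n + 1))) (e : Fin (n + 1)) (a b : Fin n) :
    π.symm (e.succAbove a) < π.symm (e.succAbove b)
      ↔ (deleteElem π e).symm a < (deleteElem π e).symm b := by
  rw [← deleteElem_symm_succAbove π e a, ← deleteElem_symm_succAbove π e b,
    Fin.succAbove_lt_succAbove_iff]

/-- For any ranking `π` with first-ranked element `e = π 0` and any ranking `π'`,
`dkt(π, π') = (pos_{π'}(e) - 1) + dkt(π \ e, π' \ e)` (positions written 0-based, so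
`pos_{π'}(e) - 1` is `π'.symm (π 0)` as a natural number). -/
theorem dkt_first_element_decomposition (n : ℕ) (π π' : Equiv.Perm (Fin (n + 1))) :
    dkt π π' = (π'.symm (π 0) : ℕ)
      + dkt (deleteElem π (π 0)) (deleteElem π' (π 0)) := by
  set e := π 0 with he
  have he0 : π.symm e = 0 := Equiv.symm_apply_apply π 0
  set S := Finset.univ.filter (fun p : Fin (n+1) × Fin (n+1) =>
    p.1 < p.2 ∧ ¬((π.symm p.1 < π.symm p.2) ↔ (π'.symm p.1 < π'.symm p.2))) with hS
  have hsplit : (S.filter (fun p => p.1 = e ∨ p.2 = e)).card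
      + (S.filter (fun p => ¬(p.1 = e ∨ p.2 = e))).card = S.card :=
    Finset.card_filter_add_card_filter_not _
  have hpos : ∀ x : Fin (n+1), x ≠ e → (0 : Fin (n+1)) < π.symm x := by
    intro x hxe
    refine Fin.pos_of_ne_zero (fun h => hxe ?_)
    have := congrArg π h
    rwa [Equiv.apply_symm_apply, ← he] at this
  have hA : (S.filter (fun p => p.1 = e ∨ p.2 = e)).card = (π'.symm e : ℕ) := by
    have hbij : (Finset.univ.filter (fun x : Fin (n+1) => π'.symm x < π'.symm e)).card
        = (S.filter (fun p => p.1 = e ∨ p.2 = e)).card := by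
      apply Finset.card_bij (fun x _ => if x < e then (x, e) else (e, x))
      · intro x hx
        simp only [Finset.mem_filter, Finset.mem_univ, true_and] at hx
        have hxe : x ≠ e := fun h => absurd (h ▸ hx) (lt_irrefl _)
        by_cases hlt : x < e
        · have hdis1 : ¬(π.symm x < π.symm e ↔ π'.symm x < π'.symm e) := by
            intro hiff
            rw [he0] at hiff
            exact absurd (hiff.mpr hx) (Fin.not_lt_zero _)
          rw [if_pos hlt]
          refine Finset.mem_filter.mpr ⟨?_, Or.inr rfl⟩
          rw [hS]
          exact Finset.mem_filter.mpr ⟨Finset.mem_univ _, hlt, hdis1⟩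
        · have hlt' : e < x := lt_of_le_of_ne (not_lt.mp hlt) (Ne.symm hxe)
          have hdis2 : ¬(π.symm e < π.symm x ↔ π'.symm e < π'.symm x) := by
            intro hiff
            rw [he0] at hiff
            exact (lt_asymm hx) (hiff.mp (hpos x hxe))
          rw [if_neg hlt]
          refine Finset.mem_filter.mpr ⟨?_, Or.inl rfl⟩
          rw [hS]
          exact Finset.mem_filter.mpr ⟨Finset.mem_univ _, hlt', hdis2⟩
      · intro x hx y hy hxy
        by_cases h1 : x < e <;> by_cases h2 : y < e
        · rw [if_pos h1, if_pos h2, Prod.mk.injEq] at hxy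
          exact hxy.1
        · rw [if_pos h1, if_neg h2, Prod.mk.injEq] at hxy
          exact absurd (hxy.1 ▸ h1) (lt_irrefl _)
        · rw [if_neg h1, if_pos h2, Prod.mk.injEq] at hxy
          rw [← hxy.1] at h2
          exact absurd h2 (lt_irrefl _)
        · rw [if_neg h1, if_neg h2, Prod.mk.injEq] at hxy
          exact hxy.2
      · rintro ⟨b1, b2⟩ hb
        rw [Finset.mem_filter, hS, Finset.mem_filter] at hb
        obtain ⟨⟨_, hlt, hdis⟩, hor⟩ := hb
        simp only at hlt hdis hor
        rcases hor with h1 | h2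
        · subst h1
          have hb2e : b2 ≠ e := fun h => absurd (h ▸ hlt) (lt_irrefl _)
          refine ⟨b2, ?_, ?_⟩
          · simp only [Finset.mem_filter, Finset.mem_univ, true_and]
            rw [he0] at hdis
            have h1 : ¬ π'.symm e < π'.symm b2 := by
              intro h
              exact hdis ⟨fun _ => h, fun _ => hpos b2 hb2e⟩
            exact lt_of_le_of_ne (not_lt.mp h1) (fun h => hb2e (π'.symm.injective h))
          · rw [if_neg (not_lt.mpr hlt.le)]
        · subst h2
          have hb1e : b1 ≠ e := fun h => absurd (h ▸ hlt) (lt_irrefl _)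
          refine ⟨b1, ?_, ?_⟩
          · simp only [Finset.mem_filter, Finset.mem_univ, true_and]
            rw [he0] at hdis
            by_contra h
            exact hdis ⟨fun hc => absurd hc (Fin.not_lt_zero _), fun hc => absurd hc h⟩
          · rw [if_pos hlt]
    rw [← hbij]
    have himg : (Finset.univ.filter (fun x : Fin (n+1) => π'.symm x < π'.symm e))
        = Finset.map π'.toEmbedding (Finset.Iio (π'.symm e)) := by
      ext x
      simp only [Finset.mem_filter, Finset.mem_univ, true_and, Finset.mem_map,
        Finset.mem_Iio, Equiv.coe_toEmbedding]
      constructor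
      · intro h; exact ⟨π'.symm x, h, π'.apply_symm_apply x⟩
      · rintro ⟨q, hq, rfl⟩; rwa [Equiv.symm_apply_apply]
    rw [himg, Finset.card_map, Fin.card_Iio]
  have hB : (S.filter (fun p => ¬(p.1 = e ∨ p.2 = e))).card
      = dkt (deleteElem π e) (deleteElem π' e) := by
    rw [dkt]
    symm
    apply Finset.card_bij (fun q _ => (e.succAbove q.1, e.succAbove q.2))
    · rintro ⟨q1, q2⟩ hq
      simp only [Finset.mem_filter, Finset.mem_univ, true_and] at hq
      obtain ⟨hlt, hdis⟩ := hq
      refine Finset.mem_filter.mpr ⟨?_, by simp [Fin.succAbove_ne]⟩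
      rw [hS]
      refine Finset.mem_filter.mpr ⟨Finset.mem_univ _,
        Fin.succAbove_lt_succAbove_iff.mpr hlt, ?_⟩
      simp only
      rw [symm_lt_symm_iff π e, symm_lt_symm_iff π' e]
      exact hdis
    · rintro ⟨q1, q2⟩ _ ⟨r1, r2⟩ _ h
      simp only [Prod.mk.injEq] at h
      exact Prod.ext (Fin.succAbove_right_injective h.1) (Fin.succAbove_right_injective h.2)
    · rintro ⟨b1, b2⟩ hb
      rw [Finset.mem_filter, hS, Finset.mem_filter] at hb
      obtain ⟨⟨_, hlt, hdis⟩, hor⟩ := hb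
      simp only at hlt hdis hor
      push_neg at hor
      obtain ⟨q1, hq1⟩ := Fin.exists_succAbove_eq hor.1
      obtain ⟨q2, hq2⟩ := Fin.exists_succAbove_eq hor.2
      refine ⟨(q1, q2), ?_, by simp [hq1, hq2]⟩
      simp only [Finset.mem_filter, Finset.mem_univ, true_and]
      rw [← hq1, ← hq2] at hlt hdis
      rw [symm_lt_symm_iff π e, symm_lt_symm_iff π' e] at hdis
      exact ⟨Fin.succAbove_lt_succAbove_iff.mp hlt, hdis⟩
  rw [dkt, ← hS, ← hsplit, hA, hB]
end

section
/- Let $\phi = e^{-\beta}$ and $\hat\phi = e^{-\hat\beta}$ with $\phi,\hat\phi \geq \phi_{\min} > 0$. Then the total variation distance between the two Mallows models with the same central permutation $\pi_0$ satisfies $\|\mathcal{M}_n(\phi,\pi_0) - \mathcal{M}_n(\hat\phi,\pi_0)\|_{TV} \leq \frac{n^2}{\phi_{\min}}|\phi - \hat\phi|$, provided $n^2|\beta - \hat\beta| \leq 1/2$. -/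
open Finset

lemma dkt_le_sq (n : ℕ) (π π0 : Equiv.Perm (Fin n)) : dkt π π0 ≤ n ^ 2 := by
  unfold dkt
  calc _ ≤ (Finset.univ : Finset (Fin n × Fin n)).card := Finset.card_filter_le _ _
    _ = n ^ 2 := by simp [sq]

lemma pow_sub_pow_le' {φ φh φmin : ℝ} (hmin : 0 < φmin) (h1 : φmin ≤ φ)
    (h2 : 0 ≤ φh) (hle : φh ≤ φ) (d m : ℕ) (hd : d ≤ m) :
    φ ^ d - φh ^ d ≤ (m : ℝ) / φmin * (φ - φh) * φ ^ d := by
  have hφ : 0 < φ := hmin.trans_le h1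
  rcases Nat.eq_zero_or_pos d with h0 | hpos
  · subst h0; simp
    exact mul_nonneg (by positivity) (sub_nonneg.2 hle)
  · have key : φ ^ d - φh ^ d = (∑ i ∈ Finset.range d, φ ^ i * φh ^ (d - 1 - i)) * (φ - φh) :=
      (geom_sum₂_mul φ φh d).symm
    have hsum : (∑ i ∈ Finset.range d, φ ^ i * φh ^ (d - 1 - i)) ≤ (d : ℝ) * φ ^ (d - 1) := by
      calc (∑ i ∈ Finset.range d, φ ^ i * φh ^ (d - 1 - i))
          ≤ ∑ _i ∈ Finset.range d, φ ^ (d - 1) := by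
            refine Finset.sum_le_sum fun i hi => ?_
            have hi' := Finset.mem_range.mp hi
            calc φ ^ i * φh ^ (d - 1 - i) ≤ φ ^ i * φ ^ (d - 1 - i) := by
                  exact mul_le_mul_of_nonneg_left (pow_le_pow_left₀ h2 hle _) (by positivity)
              _ = φ ^ (d - 1) := by rw [← pow_add]; congr 1; omega
        _ = (d : ℝ) * φ ^ (d - 1) := by simp [mul_comm]
    have hstep : (d : ℝ) * φ ^ (d - 1) ≤ (m : ℝ) / φmin * φ ^ d := by
      have hdd : φ ^ d = φ ^ (d - 1) * φ := by rw [← pow_succ]; congr 1; omega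
      have h3 : (d : ℝ) * φ ^ (d - 1) ≤ (m : ℝ) * φ ^ (d - 1) :=
        mul_le_mul_of_nonneg_right (Nat.cast_le.2 hd) (by positivity)
      refine h3.trans ?_
      rw [hdd, div_mul_eq_mul_div, le_div_iff₀ hmin]
      have hp : (0:ℝ) ≤ φ ^ (d - 1) := by positivity
      have hm : (0:ℝ) ≤ (m:ℝ) := Nat.cast_nonneg m
      nlinarith [mul_le_mul_of_nonneg_left h1 hp]
    have hsub : 0 ≤ φ - φh := sub_nonneg.2 hle
    calc φ ^ d - φh ^ d = (∑ i ∈ Finset.range d, φ ^ i * φh ^ (d - 1 - i)) * (φ - φh) := key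
      _ ≤ ((d : ℝ) * φ ^ (d - 1)) * (φ - φh) := by gcongr
      _ ≤ ((m : ℝ) / φmin * φ ^ d) * (φ - φh) := by gcongr
      _ = (m : ℝ) / φmin * (φ - φh) * φ ^ d := by ring

lemma key_lemma (n : ℕ) (φ φh φmin : ℝ) (hmin : 0 < φmin) (h1 : φmin ≤ φ) (h2 : φmin ≤ φh)
    (hle : φh ≤ φ) (π0 : Equiv.Perm (Fin n)) :
    (1 / 2) * ∑ π : Equiv.Perm (Fin n),
        |φ ^ dkt π π0 / (∑ π' : Equiv.Perm (Fin n), φ ^ dkt π' π0)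
          - φh ^ dkt π π0 / (∑ π' : Equiv.Perm (Fin n), φh ^ dkt π' π0)|
      ≤ (n : ℝ) ^ 2 / φmin * (φ - φh) := by
  have hφ : 0 < φ := hmin.trans_le h1
  have hφh : 0 < φh := hmin.trans_le h2
  set Z := ∑ π' : Equiv.Perm (Fin n), φ ^ dkt π' π0 with hZ
  set Zh := ∑ π' : Equiv.Perm (Fin n), φh ^ dkt π' π0 with hZh
  have hZpos : 0 < Z := Finset.sum_pos (fun π _ => pow_pos hφ _) Finset.univ_nonempty
  have hZhpos : 0 < Zh := Finset.sum_pos (fun π _ => pow_pos hφh _) Finset.univ_nonempty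
  have hZZh : Zh ≤ Z :=
    Finset.sum_le_sum fun π _ => pow_le_pow_left₀ hφh.le hle _
  have hterm : ∀ π : Equiv.Perm (Fin n),
      |φ ^ dkt π π0 / Z - φh ^ dkt π π0 / Zh|
        ≤ (φ ^ dkt π π0 - φh ^ dkt π π0) / Z + φh ^ dkt π π0 * (1 / Zh - 1 / Z) := by
    intro π
    have hpowle : φh ^ dkt π π0 ≤ φ ^ dkt π π0 := pow_le_pow_left₀ hφh.le hle _
    have hx : (0:ℝ) ≤ (φ ^ dkt π π0 - φh ^ dkt π π0) / Z := by
      apply div_nonneg (by linarith) hZpos.le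
    have hy : (0:ℝ) ≤ φh ^ dkt π π0 * (1 / Zh - 1 / Z) := by
      apply mul_nonneg (by positivity)
      have : 1 / Z ≤ 1 / Zh := one_div_le_one_div_of_le hZhpos hZZh
      linarith
    have heq : φ ^ dkt π π0 / Z - φh ^ dkt π π0 / Zh
        = (φ ^ dkt π π0 - φh ^ dkt π π0) / Z - φh ^ dkt π π0 * (1 / Zh - 1 / Z) := by
      field_simp
      ring
    rw [heq]
    calc |(φ ^ dkt π π0 - φh ^ dkt π π0) / Z - φh ^ dkt π π0 * (1 / Zh - 1 / Z)|
        ≤ |(φ ^ dkt π π0 - φh ^ dkt π π0) / Z| + |φh ^ dkt π π0 * (1 / Zh - 1 / Z)| :=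
          abs_sub _ _
      _ = (φ ^ dkt π π0 - φh ^ dkt π π0) / Z + φh ^ dkt π π0 * (1 / Zh - 1 / Z) := by
          rw [abs_of_nonneg hx, abs_of_nonneg hy]
  have hsum : ∑ π : Equiv.Perm (Fin n),
      |φ ^ dkt π π0 / Z - φh ^ dkt π π0 / Zh| ≤ 2 * ((Z - Zh) / Z) := by
    calc ∑ π : Equiv.Perm (Fin n), |φ ^ dkt π π0 / Z - φh ^ dkt π π0 / Zh|
        ≤ ∑ π : Equiv.Perm (Fin n),
            ((φ ^ dkt π π0 - φh ^ dkt π π0) / Z + φh ^ dkt π π0 * (1 / Zh - 1 / Z)) :=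
          Finset.sum_le_sum fun π _ => hterm π
      _ = (Z - Zh) / Z + Zh * (1 / Zh - 1 / Z) := by
          rw [Finset.sum_add_distrib, ← Finset.sum_div, ← Finset.sum_mul,
            Finset.sum_sub_distrib]
      _ = 2 * ((Z - Zh) / Z) := by field_simp; ring
  have hZZh2 : Z - Zh ≤ (n : ℝ) ^ 2 / φmin * (φ - φh) * Z := by
    calc Z - Zh = ∑ π : Equiv.Perm (Fin n), (φ ^ dkt π π0 - φh ^ dkt π π0) := by
          rw [Finset.sum_sub_distrib]
      _ ≤ ∑ π : Equiv.Perm (Fin n), (n : ℝ) ^ 2 / φmin * (φ - φh) * φ ^ dkt π π0 := by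
          refine Finset.sum_le_sum fun π _ => ?_
          have := pow_sub_pow_le' hmin h1 hφh.le hle (dkt π π0) (n ^ 2) (dkt_le_sq n π π0)
          exact_mod_cast this
      _ = (n : ℝ) ^ 2 / φmin * (φ - φh) * Z := by rw [← Finset.mul_sum]
  calc (1 / 2) * ∑ π : Equiv.Perm (Fin n), |φ ^ dkt π π0 / Z - φh ^ dkt π π0 / Zh|
      ≤ (1 / 2) * (2 * ((Z - Zh) / Z)) := by linarith
    _ = (Z - Zh) / Z := by ring
    _ ≤ (n : ℝ) ^ 2 / φmin * (φ - φh) := by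
        rw [div_le_iff₀ hZpos]; exact hZZh2

/-- If `φ = e^{-β}`, `φ̂ = e^{-β̂}` with `φ, φ̂ ≥ φmin > 0` and `n²|β - β̂| ≤ 1/2`, then the
total variation distance between the Mallows models `𝓜_n(φ, π0)` and `𝓜_n(φ̂, π0)` is at
most `(n²/φmin)·|φ - φ̂|`. -/
theorem mallows_tv_distance_bound (n : ℕ) (φ φh φmin β βh : ℝ)
    (hmin : 0 < φmin) (h1 : φmin ≤ φ) (h2 : φmin ≤ φh)
    (hβ : φ = Real.exp (-β)) (hβh : φh = Real.exp (-βh))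
    (hsmall : (n : ℝ) ^ 2 * |β - βh| ≤ 1 / 2)
    (π0 : Equiv.Perm (Fin n)) :
    (1 / 2) * ∑ π : Equiv.Perm (Fin n),
        |φ ^ dkt π π0 / (∑ π' : Equiv.Perm (Fin n), φ ^ dkt π' π0)
          - φh ^ dkt π π0 / (∑ π' : Equiv.Perm (Fin n), φh ^ dkt π' π0)|
      ≤ (n : ℝ) ^ 2 / φmin * |φ - φh| := by
  rcases le_total φh φ with hle | hle
  · rw [abs_of_nonneg (sub_nonneg.2 hle)]
    exact key_lemma n φ φh φmin hmin h1 h2 hle π0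
  · rw [abs_sub_comm, abs_of_nonneg (sub_nonneg.2 hle)]
    have := key_lemma n φh φ φmin hmin h2 h1 hle π0
    simpa [abs_sub_comm] using this
end

section
/- Let $u, u', v, v'$ be vectors with $\gamma \leq \|u\|,\|v\|,\|u'\|,\|v'\| \leq 1$ and suppose $\|u \otimes v - u' \otimes v'\|_F < \delta$ with $\delta < \gamma^2/2$. Write $u = \alpha_1 u' + u^\perp$ and $v = \alpha_2 v' + v^\perp$ with $u^\perp \perp u'$ and $v^\perp \perp v'$. Then $\|u^\perp\| < \sqrt{\delta}$ and $\|v^\perp\| < \sqrt{\delta}$. -/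
/-!
Read the matrix `u vᵀ - u' v'ᵀ` column by column: its `j`-th column is
`v j • u - v' j • u' = v j • u^⊥ + (α₁ v j - v' j) • u'`, whose squared norm is at least
`v j ^ 2 ‖u^⊥‖²` by Pythagoras. Summing over `j` gives `‖u^⊥‖ ‖v‖ ≤ ‖u ⊗ v - u' ⊗ v'‖_F < δ`,
and `‖v‖ ≥ γ`, `δ < γ²` turn this into `‖u^⊥‖² < δ`. The bound for `v^⊥` is the same argument
applied to the transpose.
-/

open Finset

theorem sq_mul_sq_norm_le_sq_norm_smul_sub_smul {E : Type*} [NormedAddCommGroup E]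
    [InnerProductSpace ℝ E] {u u' p : E} {α : ℝ} (hu : u = α • u' + p)
    (hp : inner ℝ p u' = (0 : ℝ)) (a b : ℝ) : a ^ 2 * ‖p‖ ^ 2 ≤ ‖a • u - b • u'‖ ^ 2 := by
  have hsplit : a • u - b • u' = a • p + (a * α - b) • u' := by
    rw [hu]; module
  have hperp : inner ℝ (a • p) ((a * α - b) • u') = (0 : ℝ) := by
    simp [real_inner_smul_left, real_inner_smul_right, hp]
  calc a ^ 2 * ‖p‖ ^ 2 = ‖a • p‖ ^ 2 := by rw [norm_smul, mul_pow, Real.norm_eq_abs, sq_abs]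
    _ ≤ ‖a • p‖ ^ 2 + ‖(a * α - b) • u'‖ ^ 2 := le_add_of_nonneg_right (sq_nonneg _)
    _ = ‖a • u - b • u'‖ ^ 2 := by
      rw [hsplit]
      linear_combination -norm_add_sq_eq_norm_sq_add_norm_sq_real hperp

section RankOne

variable {ι κ : Type*} [Fintype ι] [Fintype κ]

theorem sum_sum_sq_sub_mul_eq_sum_sq_norm (u u' : EuclideanSpace ℝ ι) (v v' : EuclideanSpace ℝ κ) :
    ∑ i, ∑ j, (u i * v j - u' i * v' j) ^ 2 = ∑ j, ‖v j • u - v' j • u'‖ ^ 2 := by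
  rw [sum_comm]
  refine sum_congr rfl fun j _ => ?_
  simp only [EuclideanSpace.real_norm_sq_eq, PiLp.sub_apply, PiLp.smul_apply, smul_eq_mul, mul_comm]

theorem norm_mul_norm_le_sqrt_sum_sum_sq_sub_mul {u u' p : EuclideanSpace ℝ ι} {α : ℝ}
    (hu : u = α • u' + p) (hp : inner ℝ p u' = (0 : ℝ)) (v v' : EuclideanSpace ℝ κ) :
    ‖p‖ * ‖v‖ ≤ √(∑ i, ∑ j, (u i * v j - u' i * v' j) ^ 2) := by
  apply Real.le_sqrt_of_sq_le
  rw [sum_sum_sq_sub_mul_eq_sum_sq_norm, mul_pow, EuclideanSpace.real_norm_sq_eq v, mul_sum]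
  refine sum_le_sum fun j _ => ?_
  rw [mul_comm]
  exact sq_mul_sq_norm_le_sq_norm_smul_sub_smul hu hp (v j) (v' j)

theorem sum_sum_sq_sub_mul_comm (u u' : EuclideanSpace ℝ ι) (v v' : EuclideanSpace ℝ κ) :
    ∑ i, ∑ j, (u i * v j - u' i * v' j) ^ 2 = ∑ j, ∑ i, (v j * u i - v' j * u' i) ^ 2 := by
  rw [sum_comm]
  simp only [mul_comm]

end RankOne

theorem lt_sqrt_of_mul_lt_of_le {a b γ δ : ℝ} (ha : 0 ≤ a) (hγ : 0 ≤ γ) (hb : γ ≤ b)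
    (hab : a * b < δ) (hδ : δ < γ ^ 2) : a < √δ := by
  rw [Real.lt_sqrt ha]
  have haγ : a * γ < δ := (mul_le_mul_of_nonneg_left hb ha).trans_lt hab
  nlinarith [mul_nonneg ha hγ]

theorem rank_one_perturbation_general (m n : ℕ)
    (u up u' : EuclideanSpace ℝ (Fin m)) (v vp v' : EuclideanSpace ℝ (Fin n))
    (α₁ α₂ γ δ : ℝ) (hγ : 0 < γ)
    (hu : γ ≤ ‖u‖) (hv : γ ≤ ‖v‖)
    (hδclose : Real.sqrt (∑ i, ∑ j, (u i * v j - u' i * v' j) ^ 2) < δ)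
    (hδsmall : δ < γ ^ 2 / 2)
    (hdu : u = α₁ • u' + up) (hou : inner ℝ up u' = (0 : ℝ))
    (hdv : v = α₂ • v' + vp) (hov : inner ℝ vp v' = (0 : ℝ)) :
    ‖up‖ < Real.sqrt δ ∧ ‖vp‖ < Real.sqrt δ := by
  have hδγ : δ < γ ^ 2 := by linarith [sq_nonneg γ]
  have hup : ‖up‖ * ‖v‖ < δ :=
    (norm_mul_norm_le_sqrt_sum_sum_sq_sub_mul hdu hou v v').trans_lt hδclose
  have hvp : ‖vp‖ * ‖u‖ < δ := by
    have hrows := norm_mul_norm_le_sqrt_sum_sum_sq_sub_mul hdv hov u u'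
    rw [← sum_sum_sq_sub_mul_comm] at hrows
    exact hrows.trans_lt hδclose
  exact ⟨lt_sqrt_of_mul_lt_of_le (norm_nonneg _) hγ.le hv hup hδγ,
    lt_sqrt_of_mul_lt_of_le (norm_nonneg _) hγ.le hu hvp hδγ⟩

/-- If the rank-one matrices `u ⊗ v` and `u' ⊗ v'` are `δ`-close in Frobenius norm, all four
vectors have norms in `[γ, 1]`, and `δ < γ²/2`, then in the orthogonal decompositions
`u = α₁ u' + u^⊥` and `v = α₂ v' + v^⊥` the perpendicular parts have norm `< √δ`. -/
theorem rank_one_perturbation (m n : ℕ)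
    (u up u' : EuclideanSpace ℝ (Fin m)) (v vp v' : EuclideanSpace ℝ (Fin n))
    (α₁ α₂ γ δ : ℝ) (hγ : 0 < γ)
    (hu : γ ≤ ‖u‖) (hu1 : ‖u‖ ≤ 1) (hv : γ ≤ ‖v‖) (hv1 : ‖v‖ ≤ 1)
    (hu' : γ ≤ ‖u'‖) (hu'1 : ‖u'‖ ≤ 1) (hv' : γ ≤ ‖v'‖) (hv'1 : ‖v'‖ ≤ 1)
    (hδclose : Real.sqrt (∑ i, ∑ j, (u i * v j - u' i * v' j) ^ 2) < δ)
    (hδsmall : δ < γ ^ 2 / 2)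
    (hdu : u = α₁ • u' + up) (hou : inner ℝ up u' = (0 : ℝ))
    (hdv : v = α₂ • v' + vp) (hov : inner ℝ vp v' = (0 : ℝ)) :
    ‖up‖ < Real.sqrt δ ∧ ‖vp‖ < Real.sqrt δ :=
  rank_one_perturbation_general m n u up u' v vp v' α₁ α₂ γ δ hγ hu hv hδclose hδsmall hdu hou hdv
    hov
end

section
/- Consider a Mallows model of length $n$ with parameter $\phi$ and central permutation $\pi^* = (e_1,\ldots,e_n)$. Let $f(i \to j)$ be the probability that the element at position $i$ of $\pi^*$ is ranked at position $j$ in a random sample. Then for all $i,j$, $f(i \to j) = f(j \to i)$. -/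
open Finset

theorem not_lt_iff_lt_symm {α β γ : Type*} [LinearOrder β] [LinearOrder γ]
    {f : α → β} {g : α → γ} (hf : f.Injective) (hg : g.Injective) :
    ∀ a b, ¬(f a < f b ↔ g a < g b) → ¬(f b < f a ↔ g b < g a) := by
  intro a b h
  rcases eq_or_ne a b with rfl | hab
  · exact h
  have hf' := hf.ne hab
  have hg' := hg.ne hab
  rcases hf'.lt_or_gt with h1 | h1 <;> rcases hg'.lt_or_gt with h2 | h2 <;>
    simp_all [not_lt_of_gt]

section PairCount

variable {α : Type*} [LinearOrder α] [Fintype α]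

-- Both sides count the unordered pairs `{a, b}` with `R a b`.
theorem card_filter_comp_lt_eq_card_filter_lt {β : Type*} [LinearOrder β] {r : α → β}
    (hr : r.Injective) {R : α → α → Prop} [DecidableRel R] (hR : ∀ a b, R a b → R b a) :
    #{p : α × α | r p.1 < r p.2 ∧ R p.1 p.2} = #{p : α × α | p.1 < p.2 ∧ R p.1 p.2} := by
  refine card_nbij' (fun p => if p.1 < p.2 then p else p.swap)
    (fun p => if r p.1 < r p.2 then p else p.swap) ?_ ?_ ?_ ?_
  · intro p hp
    simp only [coe_filter, Set.mem_ofPred_eq, mem_univ, true_and] at hp ⊢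
    split_ifs with h
    · exact ⟨h, hp.2⟩
    · exact ⟨lt_of_le_of_ne (not_lt.1 h) fun h' => hp.1.ne (congrArg r h'.symm), hR _ _ hp.2⟩
  · intro p hp
    simp only [coe_filter, Set.mem_ofPred_eq, mem_univ, true_and] at hp ⊢
    split_ifs with h
    · exact ⟨h, hp.2⟩
    · exact ⟨lt_of_le_of_ne (not_lt.1 h) (hr.ne hp.1.ne).symm, hR _ _ hp.2⟩
  · intro p hp
    simp only [coe_filter, Set.mem_ofPred_eq, mem_univ, true_and] at hp
    by_cases h : p.1 < p.2
    · simp [h, hp.1]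
    · simp [h, hp.1.not_gt]
  · intro p hp
    simp only [coe_filter, Set.mem_ofPred_eq, mem_univ, true_and] at hp
    by_cases h : r p.1 < r p.2
    · simp [h, hp.1]
    · simp [h, hp.1.not_gt]

theorem card_filter_lt_perm_apply (σ : Equiv.Perm α) {R : α → α → Prop} [DecidableRel R]
    (hR : ∀ a b, R a b → R b a) :
    #{p : α × α | p.1 < p.2 ∧ R (σ p.1) (σ p.2)} = #{p : α × α | p.1 < p.2 ∧ R p.1 p.2} := by
  calc #{p : α × α | p.1 < p.2 ∧ R (σ p.1) (σ p.2)}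
      = #{p : α × α | σ.symm p.1 < σ.symm p.2 ∧ R p.1 p.2} :=
        card_equiv (σ.prodCongr σ) (by simp)
    _ = _ := card_filter_comp_lt_eq_card_filter_lt σ.symm.injective hR

end PairCount

section KendallTau

variable {n : ℕ}

theorem dkt_mul_left (σ π π' : Equiv.Perm (Fin n)) : dkt (σ * π) (σ * π') = dkt π π' := by
  have := card_filter_lt_perm_apply σ⁻¹
    (not_lt_iff_lt_symm π.symm.injective π'.symm.injective)
  simpa [dkt, ← Equiv.Perm.inv_def] using this

theorem dkt_inv_one (σ : Equiv.Perm (Fin n)) : dkt σ⁻¹ 1 = dkt σ 1 := by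
  have := card_filter_lt_perm_apply σ⁻¹
    (not_lt_iff_lt_symm Function.injective_id σ.injective)
  simpa [dkt, ← Equiv.Perm.inv_def, iff_comm] using this.symm

theorem dkt_conj (π0 π : Equiv.Perm (Fin n)) : dkt (π0 * π⁻¹ * π0) π0 = dkt π π0 := by
  calc dkt (π0 * π⁻¹ * π0) π0 = dkt (π0 * (π0⁻¹ * π)⁻¹) (π0 * 1) := by group
    _ = dkt (π0⁻¹ * π) 1 := by rw [dkt_mul_left, dkt_inv_one]
    _ = dkt π π0 := by rw [← dkt_mul_left π0]; group

end KendallTau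

theorem mallows_position_symmetry_general (n : ℕ) (φ : ℝ)
    (π0 : Equiv.Perm (Fin n)) (i j : Fin n) :
    (∑ π ∈ Finset.univ.filter (fun π : Equiv.Perm (Fin n) => π.symm (π0 i) = j),
        φ ^ dkt π π0) / (∑ π : Equiv.Perm (Fin n), φ ^ dkt π π0)
      = (∑ π ∈ Finset.univ.filter (fun π : Equiv.Perm (Fin n) => π.symm (π0 j) = i),
          φ ^ dkt π π0) / (∑ π : Equiv.Perm (Fin n), φ ^ dkt π π0) := by
  have conj_involutive : ∀ π : Equiv.Perm (Fin n), π0 * (π0 * π⁻¹ * π0)⁻¹ * π0 = π := by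
    intro π; group
  have swaps_events : ∀ {i j : Fin n} (π : Equiv.Perm (Fin n)), π⁻¹ (π0 i) = j →
      (π0 * π⁻¹ * π0)⁻¹ (π0 j) = i := by
    intro i j π h
    simp [← h]
  congr 1
  refine sum_nbij' (fun π => π0 * π⁻¹ * π0) (fun π => π0 * π⁻¹ * π0) ?_ ?_
    (fun π _ => conj_involutive π) (fun π _ => conj_involutive π) (fun π _ => by rw [dkt_conj])
  all_goals
    intro π hπ
    simp only [mem_filter, mem_univ, true_and, ← Equiv.Perm.inv_def] at hπ ⊢
    exact swaps_events π hπ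

/-- Symmetry of the position-transition probabilities of a Mallows model:
the probability that the element at position `i` of the central ranking `π0` ends up at
position `j` equals the probability that the element at position `j` ends up at
position `i`. -/
theorem mallows_position_symmetry (n : ℕ) (φ : ℝ) (h0 : 0 < φ) (h1 : φ < 1)
    (π0 : Equiv.Perm (Fin n)) (i j : Fin n) :
    (∑ π ∈ Finset.univ.filter (fun π : Equiv.Perm (Fin n) => π.symm (π0 i) = j),
        φ ^ dkt π π0) / (∑ π : Equiv.Perm (Fin n), φ ^ dkt π π0)
      = (∑ π ∈ Finset.univ.filter (fun π : Equiv.Perm (Fin n) => π.symm (π0 j) = i),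
          φ ^ dkt π π0) / (∑ π : Equiv.Perm (Fin n), φ ^ dkt π π0) :=
  mallows_position_symmetry_general n φ π0 i j
end

section
/- In a single Mallows model $\mathcal{M}_n(\phi,\pi)$ with representative vector $x$ (where $x_i = \phi^{pos_\pi(e_i)-1}/Z_n(\phi)$), for any two distinct elements $e_i, e_j$, the probability that $\{e_i, e_j\}$ occupy the first two positions (in either order) equals $c_2(\phi)\, x_i x_j$, where $c_2(\phi) = \frac{Z_n(\phi)}{Z_{n-1}(\phi)}\cdot\frac{1+\phi}{\phi}$. -/
/-!
Left multiplication preserves the Kendall-tau distance, so the centre may be taken to be the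
identity once `i, j` are relabelled by `π₀⁻¹`. A permutation of `Fin (m + 1)` is uniquely its
first entry `a` followed by a permutation of the remaining `m` elements, and this splits off
exactly `a` inversions. Hence the normalizer `T` satisfies `T (m + 1) = Z_{m+1} T m`, and the
permutations starting with `a, b` have total weight `φ^(a + b') T (m - 1)`, where `b'` is the
rank of `b` among the elements other than `a`. The two orders of `{a, b}` give exponents
`a + b - 1` and `a + b`, so the numerator is `(1 + φ) φ^(a + b - 1) T (n - 2)`, while the
denominator is `T n = Z_n Z_{n-1} T (n - 2)`.
-/

open Finset

namespace Mallows

theorem card_filter_eq_two_mul_card_filter_lt {α : Type*} [LinearOrder α] [Fintype α]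
    (D : α → α → Prop) [DecidableRel D] (hD : ∀ a b, D a b → D b a ∧ a ≠ b) :
    #(univ.filter fun p : α × α => D p.1 p.2) =
      2 * #(univ.filter fun p : α × α => p.1 < p.2 ∧ D p.1 p.2) := by
  have hsplit : (univ.filter fun p : α × α => D p.1 p.2) =
      (univ.filter fun p : α × α => p.1 < p.2 ∧ D p.1 p.2) ∪
        univ.filter fun p : α × α => p.2 < p.1 ∧ D p.1 p.2 := by
    ext ⟨a, b⟩
    simp only [mem_filter, mem_univ, true_and, mem_union]
    constructor
    · intro h
      rcases (hD a b h).2.lt_or_gt with hab | hab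
      exacts [.inl ⟨hab, h⟩, .inr ⟨hab, h⟩]
    · rintro (⟨-, h⟩ | ⟨-, h⟩) <;> exact h
  have hdisj : Disjoint (univ.filter fun p : α × α => p.1 < p.2 ∧ D p.1 p.2)
      (univ.filter fun p : α × α => p.2 < p.1 ∧ D p.1 p.2) := by
    rw [disjoint_filter]
    exact fun p _ h h' => lt_asymm h.1 h'.1
  have hswap : #(univ.filter fun p : α × α => p.2 < p.1 ∧ D p.1 p.2) =
      #(univ.filter fun p : α × α => p.1 < p.2 ∧ D p.1 p.2) :=
    card_equiv (Equiv.prodComm α α) fun p => by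
      simp only [mem_filter, mem_univ, true_and, Equiv.prodComm_apply, Prod.fst_swap,
        Prod.snd_swap]
      exact and_congr_right fun _ => ⟨fun h => (hD _ _ h).1, fun h => (hD _ _ h).1⟩
  rw [hsplit, card_union_of_disjoint hdisj, hswap, two_mul]

theorem two_mul_dkt {n : ℕ} (π π' : Equiv.Perm (Fin n)) :
    2 * dkt π π' = #(univ.filter fun p : Fin n × Fin n =>
      ¬(π.symm p.1 < π.symm p.2 ↔ π'.symm p.1 < π'.symm p.2)) := by
  refine (card_filter_eq_two_mul_card_filter_lt
    (fun a b => ¬(π.symm a < π.symm b ↔ π'.symm a < π'.symm b)) fun a b h => ?_).symm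
  have hab : a ≠ b := by rintro rfl; simp at h
  refine ⟨fun h' => h ?_, hab⟩
  rw [← not_iff_not, not_lt, not_lt, le_iff_eq_or_lt, le_iff_eq_or_lt]
  simpa [hab.symm] using h'

-- Unlike the pairs `p.1 < p.2` counted by `dkt`, the set of discordant ordered pairs is simply
-- transported by relabelling the elements.
theorem dkt_mul_left {n : ℕ} (τ π π' : Equiv.Perm (Fin n)) :
    dkt (τ * π) (τ * π') = dkt π π' := by
  suffices 2 * dkt (τ * π) (τ * π') = 2 * dkt π π' by omega
  rw [two_mul_dkt, two_mul_dkt]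
  refine card_equiv (Equiv.prodCongr τ.symm τ.symm) fun p => ?_
  simp only [mem_filter, mem_univ, true_and]
  simp [Equiv.Perm.mul_def]

theorem sum_filter_dkt_eq {n : ℕ} {β : Type*} [AddCommMonoid β] (f : ℕ → β)
    (π₀ : Equiv.Perm (Fin n)) (P : Equiv.Perm (Fin n) → Prop) [DecidablePred P] :
    ∑ π ∈ univ.filter P, f (dkt π π₀) = ∑ σ ∈ univ.filter (fun σ => P (π₀ * σ)), f (dkt σ 1) := by
  refine (sum_equiv (Equiv.mulLeft π₀) (by simp) fun σ _ => ?_).symm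
  rw [Equiv.coe_mulLeft, ← dkt_mul_left π₀ σ 1, mul_one]

def inversions {n : ℕ} (σ : Equiv.Perm (Fin n)) : Finset (Fin n × Fin n) :=
  univ.filter fun p => p.1 < p.2 ∧ σ.symm p.2 < σ.symm p.1

theorem dkt_one {n : ℕ} (σ : Equiv.Perm (Fin n)) : dkt σ 1 = #(inversions σ) := by
  unfold dkt inversions
  congr 1
  refine filter_congr fun p _ => and_congr_right fun hp => ?_
  have hne : σ.symm p.1 ≠ σ.symm p.2 := σ.symm.injective.ne hp.ne
  simp only [Equiv.Perm.one_def, Equiv.refl_symm, Equiv.refl_apply, hp, iff_true, not_lt]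
  exact ⟨fun h => h.lt_of_ne' hne, le_of_lt⟩

/-- Reading a permutation `σ` as the ranking `σ 0, σ 1, …`, `permCons a e` ranks `a` first and
the remaining elements in the order given by `e`. -/
def permCons {m : ℕ} (a : Fin (m + 1)) (e : Equiv.Perm (Fin m)) : Equiv.Perm (Fin (m + 1)) :=
  (finSuccEquiv' 0).trans ((Equiv.optionCongr e).trans (finSuccEquiv' a).symm)

section permCons

variable {m : ℕ} (a : Fin (m + 1)) (e : Equiv.Perm (Fin m))

@[simp] theorem permCons_zero : permCons a e 0 = a := by
  simp [permCons, finSuccEquiv'_at, finSuccEquiv'_symm_none]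

@[simp] theorem permCons_succ (k : Fin m) : permCons a e k.succ = a.succAbove (e k) := by
  have : finSuccEquiv' (0 : Fin (m + 1)) k.succ = some k := by
    rw [← Fin.zero_succAbove k, finSuccEquiv'_succAbove]
  simp [permCons, this, finSuccEquiv'_symm_some]

@[simp] theorem permCons_symm_self : (permCons a e).symm a = 0 := by
  simp [permCons, finSuccEquiv'_at, finSuccEquiv'_symm_none, ← Equiv.optionCongr_symm,
    Equiv.optionCongr_apply]

@[simp] theorem permCons_symm_succAbove (k : Fin m) :
    (permCons a e).symm (a.succAbove k) = (e.symm k).succ := by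
  have : (finSuccEquiv' (0 : Fin (m + 1))).symm (some (e.symm k)) = (e.symm k).succ := by
    rw [finSuccEquiv'_symm_some, Fin.zero_succAbove]
  simp [permCons, finSuccEquiv'_succAbove, this, ← Equiv.optionCongr_symm,
    Equiv.optionCongr_apply]

theorem inversions_permCons :
    inversions (permCons a e) = Iio a ×ˢ {a} ∪
      (inversions e).map (a.succAboveEmb.prodMap a.succAboveEmb) := by
  ext ⟨p, q⟩
  rcases Fin.eq_self_or_eq_succAbove a p with hp | ⟨u, hp⟩ <;>
    rcases Fin.eq_self_or_eq_succAbove a q with hq | ⟨v, hq⟩ <;> subst hp hq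
  all_goals simp [inversions, Fin.succAbove_ne, Fin.ne_succAbove]

theorem dkt_permCons_one : dkt (permCons a e) 1 = a + dkt e 1 := by
  rw [dkt_one, dkt_one, inversions_permCons, card_union_of_disjoint, card_product, Fin.card_Iio,
    card_singleton, mul_one, card_map]
  refine disjoint_left.mpr fun p hp hp' => ?_
  obtain ⟨q, -, rfl⟩ := mem_map.mp hp'
  exact Fin.succAbove_ne a q.2 (mem_singleton.mp (mem_product.mp hp).2)

end permCons

theorem permCons_injective {m : ℕ} :
    Function.Injective fun ae : Fin (m + 1) × Equiv.Perm (Fin m) => permCons ae.1 ae.2 := by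
  rintro ⟨a, e⟩ ⟨b, f⟩ h
  have hab : a = b := by simpa using congr($h 0)
  subst hab
  exact Prod.ext rfl (Equiv.ext fun k => by simpa using congr($h k.succ))

noncomputable def permConsEquiv (m : ℕ) :
    Fin (m + 1) × Equiv.Perm (Fin m) ≃ Equiv.Perm (Fin (m + 1)) :=
  Equiv.ofBijective _ <| (Fintype.bijective_iff_injective_and_card _).mpr
    ⟨permCons_injective, by simp [Fintype.card_perm, Nat.factorial_succ]⟩

@[simp] theorem permConsEquiv_apply {m : ℕ} (ae : Fin (m + 1) × Equiv.Perm (Fin m)) :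
    permConsEquiv m ae = permCons ae.1 ae.2 := rfl

theorem sum_filter_apply_zero_eq {m : ℕ} {β : Type*} [AddCommMonoid β] (a : Fin (m + 1))
    (P : Equiv.Perm (Fin (m + 1)) → Prop) [DecidablePred P] (f : Equiv.Perm (Fin (m + 1)) → β) :
    ∑ σ ∈ univ.filter (fun σ => σ 0 = a ∧ P σ), f σ =
      ∑ e ∈ univ.filter (fun e => P (permCons a e)), f (permCons a e) := by
  refine (sum_nbij (permCons a) (by simp) ?_ ?_ fun _ _ => rfl).symm
  · exact fun e _ f _ h => congr_arg Prod.snd (permCons_injective (a₁ := (a, e)) (a₂ := (a, f)) h)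
  · rintro σ hσ
    obtain ⟨⟨b, e⟩, rfl⟩ := (permConsEquiv m).surjective σ
    simp only [coe_filter, mem_univ, true_and, permConsEquiv_apply] at hσ
    obtain ⟨rfl, hP⟩ := hσ
    exact ⟨e, by simpa using hP, rfl⟩

variable {R : Type*} [CommSemiring R]

def normalizer (φ : R) (m : ℕ) : R := ∑ σ : Equiv.Perm (Fin m), φ ^ dkt σ 1

theorem normalizer_succ (φ : R) (m : ℕ) :
    normalizer φ (m + 1) = (∑ k ∈ range (m + 1), φ ^ k) * normalizer φ m := by
  rw [normalizer, ← (permConsEquiv m).sum_comp, Fintype.sum_prod_type, ← Fin.sum_univ_eq_sum_range,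
    sum_mul]
  simp [dkt_permCons_one, pow_add, normalizer, mul_sum]

theorem sum_filter_apply_zero_apply_one (φ : R) {m : ℕ} (a : Fin (m + 2)) (b : Fin (m + 1)) :
    ∑ σ ∈ univ.filter (fun σ : Equiv.Perm (Fin (m + 2)) => σ 0 = a ∧ σ 1 = a.succAbove b),
      φ ^ dkt σ 1 = φ ^ (a + b : ℕ) * normalizer φ m := by
  have hone (e : Equiv.Perm (Fin (m + 1))) : permCons a e 1 = a.succAbove (e 0) :=
    permCons_succ a e 0
  have hb := sum_filter_apply_zero_eq b (fun _ => True) fun e => φ ^ dkt e 1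
  simp only [and_true, filter_true] at hb
  simp only [sum_filter_apply_zero_eq, hone, Fin.succAbove_right_inj, dkt_permCons_one, pow_add,
    ← mul_sum, hb, normalizer, mul_assoc]

theorem pair_eq_pair_iff {α : Type*} [DecidableEq α] {a b c d : α} :
    ({a, b} : Finset α) = {c, d} ↔ a = c ∧ b = d ∨ a = d ∧ b = c := by
  rw [← coe_inj, coe_pair, coe_pair, Set.pair_eq_pair_iff]

theorem pair_apply_eq_pair_iff {α β : Type*} [DecidableEq α] [DecidableEq β] (e : α ≃ β)
    (a b : α) (c d : β) :
    ({e a, e b} : Finset β) = {c, d} ↔ ({a, b} : Finset α) = {e.symm c, e.symm d} := by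
  simp only [pair_eq_pair_iff, ← Equiv.eq_symm_apply]

theorem pow_add_succAbove_add_pow_add_succAbove (φ : R) {m : ℕ} {i j : Fin (m + 1)}
    {b c : Fin m} (hb : i.succAbove b = j) (hc : j.succAbove c = i) :
    φ * (φ ^ (i + b : ℕ) + φ ^ (j + c : ℕ)) = (1 + φ) * φ ^ (i + j : ℕ) := by
  have : (j + c : ℕ) = i + b + 1 ∧ (i + j : ℕ) = i + b + 1 ∨
      (i + b : ℕ) = j + c + 1 ∧ (i + j : ℕ) = j + c + 1 := by
    unfold Fin.succAbove at hb hc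
    split_ifs at hb hc with h1 h2 h2 <;>
      simp only [Fin.lt_def, Fin.ext_iff, Fin.val_castSucc, Fin.val_succ] at h1 h2 hb hc <;> omega
  rcases this with ⟨hexp, hsum⟩ | ⟨hexp, hsum⟩ <;> rw [hexp, hsum] <;> ring

theorem sum_filter_pair_eq (φ : R) {m : ℕ} {i j : Fin (m + 2)} (hij : i ≠ j) :
    φ * ∑ σ ∈ univ.filter (fun σ : Equiv.Perm (Fin (m + 2)) => {σ 0, σ 1} = ({i, j} : Finset _)),
      φ ^ dkt σ 1 = (1 + φ) * φ ^ (i + j : ℕ) * normalizer φ m := by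
  obtain ⟨b, hb⟩ := Fin.exists_succAbove_eq hij.symm
  obtain ⟨c, hc⟩ := Fin.exists_succAbove_eq hij
  have hdisj : Disjoint
      (univ.filter fun σ : Equiv.Perm (Fin (m + 2)) => σ 0 = i ∧ σ 1 = j)
      (univ.filter fun σ : Equiv.Perm (Fin (m + 2)) => σ 0 = j ∧ σ 1 = i) :=
    disjoint_filter.mpr fun σ _ h h' => hij (h.1.symm.trans h'.1)
  have hsum_ij := sum_filter_apply_zero_apply_one φ i b
  have hsum_ji := sum_filter_apply_zero_apply_one φ j c
  rw [hb] at hsum_ij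
  rw [hc] at hsum_ji
  simp only [pair_eq_pair_iff, filter_or]
  rw [sum_union hdisj, hsum_ij, hsum_ji, ← add_mul, ← mul_assoc,
    pow_add_succAbove_add_pow_add_succAbove φ hb hc]

theorem normalizer_pos {φ : ℝ} (hφ : 0 < φ) (m : ℕ) : 0 < normalizer φ m :=
  sum_pos (fun _ _ => pow_pos hφ _) univ_nonempty

end Mallows

open Mallows in
/-- Second moment of a single Mallows model: for distinct elements `e_i, e_j`, the
probability that `{e_i, e_j}` occupy the first two positions (in either order) equals
`c₂(φ)·x_i·x_j`, where `x` is the representative vector (`x_e = φ^{pos(e)-1}/Z_n(φ)`,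
0-based) and `c₂(φ) = (Z_n(φ)/Z_{n-1}(φ))·(1+φ)/φ`. -/
theorem mallows_second_moment (n : ℕ) (hn : 2 ≤ n) (φ : ℝ) (h0 : 0 < φ)
    (π0 : Equiv.Perm (Fin n)) (i j : Fin n) (hij : i ≠ j) :
    (∑ π ∈ Finset.univ.filter (fun π : Equiv.Perm (Fin n) =>
        ({π ⟨0, by omega⟩, π ⟨1, by omega⟩} : Finset (Fin n)) = {i, j}), φ ^ dkt π π0)
      / (∑ π : Equiv.Perm (Fin n), φ ^ dkt π π0)
    = ((∑ k ∈ Finset.range n, φ ^ k) / (∑ k ∈ Finset.range (n - 1), φ ^ k)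
          * ((1 + φ) / φ))
        * (φ ^ ((π0.symm i : ℕ)) / ∑ k ∈ Finset.range n, φ ^ k)
        * (φ ^ ((π0.symm j : ℕ)) / ∑ k ∈ Finset.range n, φ ^ k) := by
  obtain ⟨m, rfl⟩ : ∃ m, n = m + 2 := ⟨n - 2, by omega⟩
  have hpairs := sum_filter_dkt_eq (φ ^ ·) π0 fun π => {π 0, π 1} = ({i, j} : Finset _)
  have hall := sum_filter_dkt_eq (φ ^ ·) π0 fun _ => True
  simp only [filter_true, Equiv.Perm.mul_apply, pair_apply_eq_pair_iff π0] at hpairs hall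
  have hnum := sum_filter_pair_eq φ (π0.symm.injective.ne hij)
  have hT := normalizer_pos h0 m
  change (∑ π ∈ univ.filter fun π : Equiv.Perm (Fin (m + 2)) => {π 0, π 1} = ({i, j} : Finset _),
    φ ^ dkt π π0) / _ = _
  rw [hpairs, hall, ← normalizer, normalizer_succ, normalizer_succ, show m + 2 - 1 = m + 1 from rfl]
  field_simp
  linear_combination hnum
end

section
/- Suppose two Mallows models share the same parameter $\phi = \phi_1 = \phi_2$ and have representative vectors $x, y$. Let $e_i, e_j$ be two elements with $x_i, y_i, x_j, y_j \geq \sqrt{\epsilon}$, and suppose the position-shift values $\ell_1 = pos_{\pi_1}(e_i) - pos_{\pi_2}(e_i)$ and $\ell_2 = pos_{\pi_1}(e_j) - pos_{\pi_2}(e_j)$ are distinct with $\max\{|\ell_1|,|\ell_2|\} \leq \log(\epsilon)/\log(\phi)$. Then the $2\times 2$ matrix $M = \begin{pmatrix} x_i & y_i \\ x_j & y_j\end{pmatrix}$ has second singular value $\sigma_2(M) \geq \epsilon^2(1-\phi)/4$. -/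
/-!
The representative vectors of two Mallows models with the same `φ` differ entrywise by the
factor `φ ^ ℓ`, where `ℓ` is the position shift of the element, so the determinant of
`M = [[xᵢ, yᵢ], [xⱼ, yⱼ]]` equals `yᵢ yⱼ (φ ^ ℓ₁ - φ ^ ℓ₂)`. The bound on the shifts gives
`φ ^ ℓ ≥ ε`, and since `ℓ₁ ≠ ℓ₂` the two powers are at least `ε (1 - φ)` apart; with
`yᵢ yⱼ ≥ ε` this gives `|det M| ≥ ε² (1 - φ)`. Finally `σ₁ σ₂ = |det M|` and `σ₁ ≤ 2`
because all entries lie in `[0, 1]`.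
-/

open Finset

namespace Matrix

/-- From `adj M (M w) = det M • w`, since `adj M` has the same Frobenius norm as `M`. -/
theorem det_fin_two_sq_mul_le (M : Matrix (Fin 2) (Fin 2) ℝ) (w : Fin 2 → ℝ) :
    M.det ^ 2 * (w 0 ^ 2 + w 1 ^ 2) ≤
      (M 0 0 ^ 2 + M 0 1 ^ 2 + M 1 0 ^ 2 + M 1 1 ^ 2) *
        ((M *ᵥ w) 0 ^ 2 + (M *ᵥ w) 1 ^ 2) := by
  simp only [det_fin_two, mulVec, dotProduct, Fin.sum_univ_two]
  nlinarith [sq_nonneg (M 0 1 * (M 0 0 * w 0 + M 0 1 * w 1) + M 1 1 * (M 1 0 * w 0 + M 1 1 * w 1)),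
    sq_nonneg (M 0 0 * (M 0 0 * w 0 + M 0 1 * w 1) + M 1 0 * (M 1 0 * w 0 + M 1 1 * w 1))]

theorem abs_det_fin_two_le (M : Matrix (Fin 2) (Fin 2) ℝ) {c : ℝ} (hM : ∀ k l, |M k l| ≤ c)
    (w : Fin 2 → ℝ) (hw : w 0 ^ 2 + w 1 ^ 2 = 1) :
    |M.det| ≤ 2 * c * √((M *ᵥ w) 0 ^ 2 + (M *ᵥ w) 1 ^ 2) := by
  have hc : 0 ≤ c := (abs_nonneg _).trans (hM 0 0)
  have hsq : ∀ k l, M k l ^ 2 ≤ c ^ 2 := fun k l => sq_le_sq' (abs_le.mp (hM k l)).1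
    (abs_le.mp (hM k l)).2
  have hfrob : M 0 0 ^ 2 + M 0 1 ^ 2 + M 1 0 ^ 2 + M 1 1 ^ 2 ≤ (2 * c) ^ 2 := by
    linarith [hsq 0 0, hsq 0 1, hsq 1 0, hsq 1 1]
  have hdet := M.det_fin_two_sq_mul_le w
  rw [hw, mul_one] at hdet
  calc |M.det| = √(M.det ^ 2) := (Real.sqrt_sq_eq_abs _).symm
    _ ≤ √((2 * c) ^ 2 * ((M *ᵥ w) 0 ^ 2 + (M *ᵥ w) 1 ^ 2)) :=
      Real.sqrt_le_sqrt (hdet.trans (by gcongr))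
    _ = 2 * c * √((M *ᵥ w) 0 ^ 2 + (M *ᵥ w) 1 ^ 2) := by
      rw [Real.sqrt_mul (sq_nonneg _), Real.sqrt_sq (by positivity)]

end Matrix

section Powers

variable {φ ε : ℝ}

theorem le_zpow_of_le_log_div_log (h0 : 0 < φ) (h1 : φ < 1) (hε : 0 < ε) {m : ℤ}
    (hm : (m : ℝ) ≤ Real.log ε / Real.log φ) : ε ≤ φ ^ m := by
  rw [le_div_iff_of_neg (Real.log_neg h0 h1), ← Real.log_zpow] at hm
  exact (Real.log_le_log_iff hε (zpow_pos h0 m)).mp hm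

theorem mul_one_sub_le_abs_zpow_sub_zpow (h0 : 0 < φ) (h1 : φ ≤ 1) {m k : ℤ} (hmk : m ≠ k)
    (hm : ε ≤ φ ^ m) (hk : ε ≤ φ ^ k) : ε * (1 - φ) ≤ |φ ^ m - φ ^ k| := by
  wlog hlt : m < k generalizing m k
  · rw [abs_sub_comm]
    exact this hmk.symm hk hm (lt_of_le_of_ne (not_lt.mp hlt) hmk.symm)
  have hgap : φ ^ (k - m) ≤ φ := by
    simpa using zpow_le_zpow_right_of_le_one₀ h0 h1 (show (1 : ℤ) ≤ k - m by omega)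
  have hsplit : φ ^ m - φ ^ k = φ ^ m * (1 - φ ^ (k - m)) := by
    rw [mul_sub, ← zpow_add₀ h0.ne', add_sub_cancel, mul_one]
  calc ε * (1 - φ) ≤ φ ^ m * (1 - φ ^ (k - m)) := by gcongr
    _ = |φ ^ m - φ ^ k| := by
        rw [hsplit, abs_of_nonneg (mul_nonneg (zpow_pos h0 m).le (by linarith))]

end Powers

section Mallows

variable {n : ℕ}

/-- Positions are zero-based: `π.symm e` is `pos_π(e) - 1`. -/
noncomputable def mallowsRep (φ : ℝ) (π : Equiv.Perm (Fin n)) (e : Fin n) : ℝ :=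
  φ ^ (π.symm e : ℕ) / ∑ k ∈ range n, φ ^ k

def posShift (π₁ π₂ : Equiv.Perm (Fin n)) (e : Fin n) : ℤ :=
  (π₁.symm e : ℕ) - (π₂.symm e : ℕ)

theorem mallowsRep_eq_mul_zpow_posShift {φ : ℝ} (hφ : φ ≠ 0) (π₁ π₂ : Equiv.Perm (Fin n))
    (e : Fin n) : mallowsRep φ π₁ e = mallowsRep φ π₂ e * φ ^ posShift π₁ π₂ e := by
  rw [mallowsRep, mallowsRep, posShift, zpow_sub₀ hφ, zpow_natCast, zpow_natCast]
  field_simp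

theorem abs_mallowsRep_le_one {φ : ℝ} (h0 : 0 ≤ φ) (h1 : φ ≤ 1) (π : Equiv.Perm (Fin n))
    (e : Fin n) : |mallowsRep φ π e| ≤ 1 := by
  have hZ : 1 ≤ ∑ k ∈ range n, φ ^ k := by
    simpa using single_le_sum (fun k _ => pow_nonneg h0 k) (mem_range.mpr e.pos)
  rw [mallowsRep, abs_of_nonneg (by positivity), div_le_one (by linarith)]
  exact (pow_le_one₀ h0 h1).trans hZ

end Mallows

theorem degenerate_submatrix_sigma2_general (n : ℕ) (φ ε : ℝ)
    (h0 : 0 < φ) (h1 : φ < 1) (hε : 0 < ε)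
    (π₁ π₂ : Equiv.Perm (Fin n)) (x y : Fin n → ℝ)
    (hx : ∀ e, x e = φ ^ ((π₁.symm e : ℕ)) / ∑ k ∈ Finset.range n, φ ^ k)
    (hy : ∀ e, y e = φ ^ ((π₂.symm e : ℕ)) / ∑ k ∈ Finset.range n, φ ^ k)
    (i j : Fin n)
    (hyi : Real.sqrt ε ≤ y i)
    (hyj : Real.sqrt ε ≤ y j)
    (hne : ((π₁.symm i : ℕ) : ℤ) - ((π₂.symm i : ℕ) : ℤ)
        ≠ ((π₁.symm j : ℕ) : ℤ) - ((π₂.symm j : ℕ) : ℤ))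
    (hbound : ((max |((π₁.symm i : ℕ) : ℤ) - ((π₂.symm i : ℕ) : ℤ)|
          |((π₁.symm j : ℕ) : ℤ) - ((π₂.symm j : ℕ) : ℤ)| : ℤ) : ℝ)
        ≤ Real.log ε / Real.log φ) :
    ∀ w : Fin 2 → ℝ, w 0 ^ 2 + w 1 ^ 2 = 1 →
      ε ^ 2 * (1 - φ) / 4 ≤
        Real.sqrt (((!![x i, y i; x j, y j] : Matrix (Fin 2) (Fin 2) ℝ).mulVec w 0) ^ 2
          + ((!![x i, y i; x j, y j] : Matrix (Fin 2) (Fin 2) ℝ).mulVec w 1) ^ 2) := by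
  intro w hw
  obtain rfl : x = mallowsRep φ π₁ := funext hx
  obtain rfl : y = mallowsRep φ π₂ := funext hy
  have hshift : ∀ {ℓ : ℤ}, |ℓ| ≤ max |posShift π₁ π₂ i| |posShift π₁ π₂ j| → ε ≤ φ ^ ℓ :=
    fun hℓ => le_zpow_of_le_log_div_log h0 h1 hε
      ((Int.cast_le.mpr ((le_abs_self _).trans hℓ)).trans hbound)
  have hgap := mul_one_sub_le_abs_zpow_sub_zpow h0 h1.le hne
    (hshift (le_max_left _ _)) (hshift (le_max_right _ _))
  have hyy : ε ≤ mallowsRep φ π₂ i * mallowsRep φ π₂ j := by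
    nlinarith [Real.sq_sqrt hε.le, Real.sqrt_nonneg ε]
  set M : Matrix (Fin 2) (Fin 2) ℝ :=
    !![mallowsRep φ π₁ i, mallowsRep φ π₂ i; mallowsRep φ π₁ j, mallowsRep φ π₂ j]
  have hdet_eq : M.det = mallowsRep φ π₂ i * mallowsRep φ π₂ j *
      (φ ^ posShift π₁ π₂ i - φ ^ posShift π₁ π₂ j) := by
    rw [Matrix.det_fin_two_of, mallowsRep_eq_mul_zpow_posShift h0.ne' π₁ π₂ i,
      mallowsRep_eq_mul_zpow_posShift h0.ne' π₁ π₂ j]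
    ring
  have hdet : ε ^ 2 * (1 - φ) ≤ |M.det| := by
    rw [hdet_eq, abs_mul, abs_of_nonneg (hε.le.trans hyy), sq, mul_assoc]
    exact mul_le_mul hyy hgap (mul_nonneg hε.le (sub_nonneg.mpr h1.le)) (hε.le.trans hyy)
  have hentries : ∀ k l, |M k l| ≤ 1 := by
    intro k l
    fin_cases k <;> fin_cases l <;> exact abs_mallowsRep_le_one h0.le h1.le _ _
  have hpos : 0 < ε ^ 2 * (1 - φ) := by have := sub_pos.mpr h1; positivity
  linarith [M.abs_det_fin_two_le hentries w hw]

/-- Lower bound on the second singular value of the `2×2` submatrix of representative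
vectors of two Mallows models sharing the same parameter `φ`: if elements `e_i, e_j` have
all four representative entries at least `√ε` and distinct position-shifts
`ℓ₁ = pos_{π₁}(e_i) - pos_{π₂}(e_i)` and `ℓ₂ = pos_{π₁}(e_j) - pos_{π₂}(e_j)` with
`max(|ℓ₁|,|ℓ₂|) ≤ log ε / log φ`, then `σ₂(M) ≥ ε²(1-φ)/4` for `M = [[xᵢ,yᵢ],[xⱼ,yⱼ]]`
(expressed as `‖M w‖ ≥ ε²(1-φ)/4` for every unit vector `w`). -/
theorem degenerate_submatrix_sigma2 (n : ℕ) (φ ε : ℝ)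
    (h0 : 0 < φ) (h1 : φ < 1) (hε : 0 < ε)
    (π₁ π₂ : Equiv.Perm (Fin n)) (x y : Fin n → ℝ)
    (hx : ∀ e, x e = φ ^ ((π₁.symm e : ℕ)) / ∑ k ∈ Finset.range n, φ ^ k)
    (hy : ∀ e, y e = φ ^ ((π₂.symm e : ℕ)) / ∑ k ∈ Finset.range n, φ ^ k)
    (i j : Fin n)
    (hxi : Real.sqrt ε ≤ x i) (hyi : Real.sqrt ε ≤ y i)
    (hxj : Real.sqrt ε ≤ x j) (hyj : Real.sqrt ε ≤ y j)
    (hne : ((π₁.symm i : ℕ) : ℤ) - ((π₂.symm i : ℕ) : ℤ)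
        ≠ ((π₁.symm j : ℕ) : ℤ) - ((π₂.symm j : ℕ) : ℤ))
    (hbound : ((max |((π₁.symm i : ℕ) : ℤ) - ((π₂.symm i : ℕ) : ℤ)|
          |((π₁.symm j : ℕ) : ℤ) - ((π₂.symm j : ℕ) : ℤ)| : ℤ) : ℝ)
        ≤ Real.log ε / Real.log φ) :
    ∀ w : Fin 2 → ℝ, w 0 ^ 2 + w 1 ^ 2 = 1 →
      ε ^ 2 * (1 - φ) / 4 ≤
        Real.sqrt (((!![x i, y i; x j, y j] : Matrix (Fin 2) (Fin 2) ℝ).mulVec w 0) ^ 2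
          + ((!![x i, y i; x j, y j] : Matrix (Fin 2) (Fin 2) ℝ).mulVec w 1) ^ 2) :=
  degenerate_submatrix_sigma2_general n φ ε h0 h1 hε π₁ π₂ x y hx hy i j hyi hyj hne hbound
end
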